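/- arXiv:1208.4749 — 2 statements merged into one kernel-verified Lean document; each statement's English description precedes it below -/
import Mathlib

section
/- Let θ be a cover-preserving join-congruence of the square grid G_n such that, for all i ∈ {1,…,n}, ((i−1,0),(i,0)) ∉ θ and ((0,i−1),(0,i)) ∉ θ. Then θ equals the smallest join-congruence of G_n containing δ(B) for every source cell B of θ. -/
/-- The square grid `G_n`: the direct product of two `(n+1)`-element chains. -/
abbrev Grid (n : ℕ) := Fin (n + 1) × Fin (n + 1)

/-- `θ` is a join-congruence: an equivalence relation compatible with `⊔`. -/
def IsJoinCong {S : Type*} [SemilatticeSup S] (θ : S → S → Prop) : Prop :=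
  Equivalence θ ∧ ∀ a b c : S, θ a b → θ (a ⊔ c) (b ⊔ c)

/-- The smallest join-congruence containing the relation `R`. -/
def joinCongGen {S : Type*} [SemilatticeSup S] (R : S → S → Prop) : S → S → Prop :=
  fun a b => ∀ θ : S → S → Prop, IsJoinCong θ → (∀ x y, R x y → θ x y) → θ a b

theorem joinCongGen_equivalence {S : Type*} [SemilatticeSup S] (R : S → S → Prop) :
    Equivalence (joinCongGen R) where
  refl a := fun _θ hθ _ => hθ.1.refl a
  symm h := fun θ hθ hR => hθ.1.symm (h θ hθ hR)
  trans h₁ h₂ := fun θ hθ hR => hθ.1.trans (h₁ θ hθ hR) (h₂ θ hθ hR)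

/-- The generating pairs of `β_π`. -/
def betaGen {n : ℕ} (π : Equiv.Perm (Fin n)) : Grid n → Grid n → Prop :=
  fun a b => ∃ i : Fin n,
    (a = (i.castSucc, (π i).succ) ∧ b = (i.succ, (π i).succ)) ∨
    (a = (i.succ, (π i).castSucc) ∧ b = (i.succ, (π i).succ))

/-- `β_π`, the smallest join-congruence on the grid containing `betaGen π`. -/
def beta {n : ℕ} (π : Equiv.Perm (Fin n)) : Grid n → Grid n → Prop :=
  joinCongGen (betaGen π)

/-- The setoid on the grid determined by `β_π`. -/
def betaSetoid {n : ℕ} (π : Equiv.Perm (Fin n)) : Setoid (Grid n) :=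
  ⟨beta π, joinCongGen_equivalence _⟩

/-- The quotient `G_n/β_π`. -/
def QuotGrid {n : ℕ} (π : Equiv.Perm (Fin n)) := Quotient (betaSetoid π)

/-- The order on `G_n/β_π`: `[a] ≤ [b]` iff `(a ⊔ b, b) ∈ β_π`. -/
instance QuotGrid.instLE {n : ℕ} (π : Equiv.Perm (Fin n)) : LE (QuotGrid π) :=
  ⟨fun x y => ∃ a b : Grid n,
    x = Quotient.mk (betaSetoid π) a ∧ y = Quotient.mk (betaSetoid π) b ∧ beta π (a ⊔ b) b⟩

/-- The quotient order induced by a join-congruence `θ`: `[a] ≤ [b]` iff `θ (a ⊔ b) b`. -/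
def QLe {S : Type*} [SemilatticeSup S] (θ : S → S → Prop) (a b : S) : Prop :=
  θ (a ⊔ b) b

/-- The corresponding strict order on θ-classes. -/
def QLt {S : Type*} [SemilatticeSup S] (θ : S → S → Prop) (a b : S) : Prop :=
  QLe θ a b ∧ ¬ QLe θ b a

/-- `θ` is cover-preserving: whenever `x ⋖ y`, the classes satisfy `[x] = [y]` or
`[x] ⋖ [y]` in the quotient (i.e. `[x] < [y]` with no class strictly in between). -/
def CoverPreservingJC {S : Type*} [Lattice S] (θ : S → S → Prop) : Prop :=
  ∀ x y : S, x ⋖ y →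
    θ x y ∨ (QLt θ x y ∧ ∀ z : S, QLt θ x z → QLt θ z y → False)

/-- The 4-cell `[(i−1,j−1),(i,j)]` is a source cell of `θ`: both upper edges are
collapsed but the long diagonal is not. -/
def SourceCell {n : ℕ} (θ : Grid n → Grid n → Prop) (i j : Fin n) : Prop :=
  θ (i.castSucc, j.succ) (i.succ, j.succ) ∧
  θ (i.succ, j.castSucc) (i.succ, j.succ) ∧
  ¬ θ (i.castSucc, j.castSucc) (i.succ, j.succ)

/-- The generating pairs of `δ(B)` for the 4-cell `B = [(i−1,j−1),(i,j)]`: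
the two upper edges of `B`. -/
def deltaGen {n : ℕ} (i j : Fin n) : Grid n → Grid n → Prop :=
  fun a b => (a = (i.castSucc, j.succ) ∧ b = (i.succ, j.succ)) ∨
             (a = (i.succ, j.castSucc) ∧ b = (i.succ, j.succ))

/-!
Both inclusions are clear except `θ ≤ ψ`, where `ψ` is the join-congruence generated by the
`δ(B)`. In a finite lattice it suffices to check the covering pairs collapsed by `θ`. A collapsed
edge of `G_n` lies on no lower boundary chain, so it is the top (or right) edge of a 4-cell. If
the parallel edge of that cell is collapsed, induction on the row and a join give the claim;
otherwise cover preservation forces the cell to be a source cell, whose `δ` contains the edge.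
-/

variable {S : Type*}

theorem joinCongGen_isJoinCong [SemilatticeSup S] (R : S → S → Prop) :
    IsJoinCong (joinCongGen R) :=
  ⟨joinCongGen_equivalence R, fun a b c h θ hθ hR => hθ.2 a b c (h θ hθ hR)⟩

theorem joinCongGen_of_rel [SemilatticeSup S] {R : S → S → Prop} {a b : S} (h : R a b) :
    joinCongGen R a b :=
  fun _ _ hR => hR a b h

theorem IsJoinCong.rel_sup_right [SemilatticeSup S] {θ : S → S → Prop} (hθ : IsJoinCong θ)
    {a b : S} (h : θ a b) : θ a (a ⊔ b) := by
  simpa [sup_comm b] using hθ.2 a b a h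

-- If `(y, v)` survived, `[y]` would lie strictly between `[x]` and `[u]` in the quotient.
theorem CoverPreservingJC.rel_side_of_rel_top [Lattice S] {θ : S → S → Prop}
    (hjc : IsJoinCong θ) (hcp : CoverPreservingJC θ) {x y u v : S} (hxu : x ⋖ u) (hxy : x ≤ y)
    (huy : u ⊔ y = v) (huv : θ u v) (hxy' : ¬ θ x y) : θ y v ∧ ¬ θ x v := by
  have hxy_sup : x ⊔ y = y := sup_eq_right.mpr hxy
  have hvy_sup : v ⊔ y = v := sup_eq_left.mpr (huy ▸ le_sup_right)
  have hxv : ¬ θ x v := fun h => hxy' <| hjc.1.trans h <| hjc.1.symm <| by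
    simpa only [hxy_sup, hvy_sup] using hjc.2 x v y h
  refine ⟨by_contra fun hyv => ?_, hxv⟩
  rcases hcp x u hxu with hxu' | ⟨-, hmid⟩
  · exact hxv (hjc.1.trans hxu' huv)
  · refine hmid y ⟨?_, ?_⟩ ⟨?_, ?_⟩ <;>
      simp only [QLe, hxy_sup, sup_eq_left.mpr hxy, huy, sup_comm y u]
    · exact hjc.1.refl y
    · exact fun h => hxy' (hjc.1.symm h)
    · exact hjc.1.symm huv
    · exact fun h => hyv (hjc.1.symm h)

-- Every interval collapsed by `θ` is a chain of collapsed covers.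
theorem IsJoinCong.rel_of_forall_covBy [Lattice S] [Finite S] {θ ψ : S → S → Prop}
    (hθ : IsJoinCong θ) (hψ : IsJoinCong ψ) (hcov : ∀ x y, x ⋖ y → θ x y → ψ x y)
    {a b : S} (hab : θ a b) : ψ a b := by
  have hle : ∀ a b, a ≤ b → θ a b → ψ a b := by
    intro a b
    induction a using WellFoundedGT.induction with
    | _ a ih =>
      intro hab h
      rcases hab.eq_or_lt with rfl | hlt
      · exact hψ.1.refl a
      obtain ⟨c, hac, hcb⟩ := exists_covBy_le_of_lt hlt
      have hcb' : θ c b := by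
        simpa [sup_eq_right.mpr hac.le, sup_eq_left.mpr hcb] using hθ.2 a b c h
      exact hψ.1.trans (hcov a c hac (hθ.1.trans h (hθ.1.symm hcb'))) (ih c hac.lt hcb hcb')
  have hb : ψ b (a ⊔ b) := by
    simpa [sup_comm] using hle b _ le_sup_left (hθ.rel_sup_right (hθ.1.symm hab))
  exact hψ.1.trans (hle a _ le_sup_left (hθ.rel_sup_right hab)) (hψ.1.symm hb)

theorem Fin.exists_castSucc_succ_of_covBy {n : ℕ} {a b : Fin (n + 1)} (h : a ⋖ b) :
    ∃ i : Fin n, a = i.castSucc ∧ b = i.succ := by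
  have h' : (a : ℕ) + 1 = b := Nat.covBy_iff_add_one_eq.mp (Fin.covBy_iff.mp h)
  exact ⟨⟨a, by omega⟩, Fin.ext rfl, Fin.ext (by simp [h'])⟩

theorem Fin.castSucc_covBy_succ {n : ℕ} (i : Fin n) : i.castSucc ⋖ i.succ :=
  Fin.covBy_iff.mpr (by simp)

namespace Grid

variable {n : ℕ} {θ : Grid n → Grid n → Prop}

def sourceCellGen (θ : Grid n → Grid n → Prop) : Grid n → Grid n → Prop :=
  fun a b => ∃ i j : Fin n, SourceCell θ i j ∧ deltaGen i j a b

theorem joinCongGen_sourceCellGen_of_horizontal_edge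
    (hjc : IsJoinCong θ) (hcp : CoverPreservingJC θ)
    (hc : ∀ i : Fin n, ¬ θ (i.castSucc, (0 : Fin (n + 1))) (i.succ, (0 : Fin (n + 1)))) :
    ∀ (k : Fin (n + 1)) (i : Fin n), θ (i.castSucc, k) (i.succ, k) →
      joinCongGen (sourceCellGen θ) (i.castSucc, k) (i.succ, k) := by
  intro k
  induction k using Fin.induction with
  | zero => exact fun i h => absurd h (hc i)
  | succ k ih =>
    intro i h
    by_cases hlow : θ (i.castSucc, k.castSucc) (i.succ, k.castSucc)
    · simpa [Fin.castSucc_le_succ] using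
        (joinCongGen_isJoinCong _).2 _ _ (i.castSucc, k.succ) (ih i hlow)
    · obtain ⟨hside, hdiag⟩ := hcp.rel_side_of_rel_top hjc
        (Prod.mk_covBy_mk_iff_right.mpr (Fin.castSucc_covBy_succ k))
        (Prod.mk_le_mk.mpr ⟨Fin.castSucc_le_succ i, le_rfl⟩)
        (by simp [Fin.castSucc_le_succ]) h hlow
      exact joinCongGen_of_rel ⟨i, k, ⟨h, hside, hdiag⟩, .inl ⟨rfl, rfl⟩⟩

theorem joinCongGen_sourceCellGen_of_vertical_edge
    (hjc : IsJoinCong θ) (hcp : CoverPreservingJC θ)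
    (hd : ∀ j : Fin n, ¬ θ ((0 : Fin (n + 1)), j.castSucc) ((0 : Fin (n + 1)), j.succ)) :
    ∀ (k : Fin (n + 1)) (j : Fin n), θ (k, j.castSucc) (k, j.succ) →
      joinCongGen (sourceCellGen θ) (k, j.castSucc) (k, j.succ) := by
  intro k
  induction k using Fin.induction with
  | zero => exact fun j h => absurd h (hd j)
  | succ k ih =>
    intro j h
    by_cases hlow : θ (k.castSucc, j.castSucc) (k.castSucc, j.succ)
    · simpa [Fin.castSucc_le_succ] using
        (joinCongGen_isJoinCong _).2 _ _ (k.succ, j.castSucc) (ih j hlow)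
    · obtain ⟨hside, hdiag⟩ := hcp.rel_side_of_rel_top hjc
        (Prod.mk_covBy_mk_iff_left.mpr (Fin.castSucc_covBy_succ k))
        (Prod.mk_le_mk.mpr ⟨le_rfl, Fin.castSucc_le_succ j⟩)
        (by simp [Fin.castSucc_le_succ]) h hlow
      exact joinCongGen_of_rel ⟨k, j, ⟨hside, h, hdiag⟩, .inr ⟨rfl, rfl⟩⟩

theorem joinCongGen_sourceCellGen_of_covBy (hjc : IsJoinCong θ) (hcp : CoverPreservingJC θ)
    (hc : ∀ i : Fin n, ¬ θ (i.castSucc, (0 : Fin (n + 1))) (i.succ, (0 : Fin (n + 1))))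
    (hd : ∀ j : Fin n, ¬ θ ((0 : Fin (n + 1)), j.castSucc) ((0 : Fin (n + 1)), j.succ)) :
    ∀ x y : Grid n, x ⋖ y → θ x y → joinCongGen (sourceCellGen θ) x y := by
  rintro ⟨x₁, x₂⟩ ⟨y₁, y₂⟩ hxy h
  rcases Prod.mk_covBy_mk_iff.mp hxy with ⟨h₁, rfl⟩ | ⟨h₂, rfl⟩
  · obtain ⟨i, rfl, rfl⟩ := Fin.exists_castSucc_succ_of_covBy h₁
    exact joinCongGen_sourceCellGen_of_horizontal_edge hjc hcp hc x₂ i h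
  · obtain ⟨j, rfl, rfl⟩ := Fin.exists_castSucc_succ_of_covBy h₂
    exact joinCongGen_sourceCellGen_of_vertical_edge hjc hcp hd x₁ j h

end Grid

/-- a cover-preserving join-congruence `θ` of the square grid `G_n`
collapsing no edge of the two lower boundary chains equals the smallest
join-congruence containing `δ(B)` for every source cell `B` of `θ`. -/
theorem joinCong_eq_gen_by_source_cells {n : ℕ} (θ : Grid n → Grid n → Prop)
    (hjc : IsJoinCong θ) (hcp : CoverPreservingJC θ)
    (hc : ∀ i : Fin n, ¬ θ (i.castSucc, (0 : Fin (n + 1))) (i.succ, (0 : Fin (n + 1))))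
    (hd : ∀ i : Fin n, ¬ θ ((0 : Fin (n + 1)), i.castSucc) ((0 : Fin (n + 1)), i.succ)) :
    θ = joinCongGen (fun a b => ∃ i j : Fin n, SourceCell θ i j ∧ deltaGen i j a b) := by
  funext a b
  refine propext ⟨hjc.rel_of_forall_covBy (joinCongGen_isJoinCong _)
    (Grid.joinCongGen_sourceCellGen_of_covBy hjc hcp hc hd), fun h => h θ hjc ?_⟩
  rintro x y ⟨i, j, hsrc, ⟨rfl, rfl⟩ | ⟨rfl, rfl⟩⟩
  exacts [hsrc.1, hsrc.2.1]
end

section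
/- Let M be a finite slim semimodular lattice and let U and V be maximal chains of M such that every join-irreducible element of M belongs to U ∪ V. Then U ∩ V equals the set of narrows of M, i.e., U ∩ V = {z ∈ M : z is comparable with every element of M}. -/
/-- `p` is join-irreducible: `p ≠ ⊥` and `p = a ⊔ b` implies `p = a` or `p = b`. -/
def JoinIrred {L : Type*} [Lattice L] [OrderBot L] (p : L) : Prop :=
  p ≠ ⊥ ∧ ∀ a b : L, p = a ⊔ b → p = a ∨ p = b

/-- `u` is meet-irreducible: `u ≠ ⊤` and `u = a ⊓ b` implies `u = a` or `u = b`. -/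
def MeetIrred {L : Type*} [Lattice L] [OrderTop L] (u : L) : Prop :=
  u ≠ ⊤ ∧ ∀ a b : L, u = a ⊓ b → u = a ∨ u = b

/-- A lattice is slim if its join-irreducible elements contain no three-element antichain. -/
def Slim (L : Type*) [Lattice L] [OrderBot L] : Prop :=
  ¬ ∃ a b c : L, JoinIrred a ∧ JoinIrred b ∧ JoinIrred c ∧
    ¬ a ≤ b ∧ ¬ b ≤ a ∧ ¬ a ≤ c ∧ ¬ c ≤ a ∧ ¬ b ≤ c ∧ ¬ c ≤ b

/-- A lattice is (upper) semimodular if `a ⊓ b ⋖ a` implies `b ⋖ a ⊔ b`. -/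
def Semimodular (L : Type*) [Lattice L] : Prop :=
  ∀ a b : L, a ⊓ b ⋖ a → b ⋖ a ⊔ b

/-- `L` has length `n`: there is a chain `x₀ < ⋯ < x_n` and no longer chain. -/
def HasLength (L : Type*) [Preorder L] (n : ℕ) : Prop :=
  (∃ x : Fin (n + 1) → L, StrictMono x) ∧
    ∀ (m : ℕ) (x : Fin (m + 1) → L), StrictMono x → m ≤ n

/-!
Let `z ∈ U ∩ V` and `x ∈ M`. If every join-irreducible below `x` lies below `z`, then `x ≤ z`,
since `x` is the join of the join-irreducibles below it. Otherwise some join-irreducible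
`p ≤ x` is not below `z`; as `p` lies in `U` or in `V`, it is comparable with `z`, so
`z ≤ p ≤ x`. Conversely, an element comparable with everything extends any maximal chain,
hence belongs to it.
-/

theorem joinIrred_iff_supIrred {L : Type*} [Lattice L] [OrderBot L] {p : L} :
    JoinIrred p ↔ SupIrred p := by
  rw [JoinIrred, SupIrred, isMin_iff_eq_bot]
  refine and_congr_right fun _ => ⟨fun h b c hbc => ?_, fun h b c hbc => ?_⟩
  · exact (h b c hbc.symm).imp Eq.symm Eq.symm
  · exact (h hbc.symm).imp Eq.symm Eq.symm

theorem le_of_forall_joinIrred_le {L : Type*} [Lattice L] [OrderBot L] [WellFoundedLT L]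
    {x z : L} (h : ∀ p, JoinIrred p → p ≤ x → p ≤ z) : x ≤ z := by
  obtain ⟨s, rfl, hs⟩ := exists_supIrred_decomposition x
  exact Finset.sup_le fun b hb =>
    h b (joinIrred_iff_supIrred.2 (hs hb)) (Finset.le_sup (f := id) hb)

theorem le_or_le_of_mem_inter_of_joinIrred_subset {L : Type*} [Lattice L] [OrderBot L]
    [WellFoundedLT L] {U V : Set L} (hU : IsChain (· ≤ ·) U) (hV : IsChain (· ≤ ·) V)
    (hJ : ∀ p, JoinIrred p → p ∈ U ∪ V) {z : L} (hz : z ∈ U ∩ V) (x : L) :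
    z ≤ x ∨ x ≤ z := by
  by_cases h : ∀ p, JoinIrred p → p ≤ x → p ≤ z
  · exact .inr (le_of_forall_joinIrred_le h)
  push Not at h
  obtain ⟨p, hp, hpx, hpz⟩ := h
  have hzp : z ≤ p := by
    rcases hJ p hp with hpU | hpV
    · exact (hU.total hz.1 hpU).resolve_right hpz
    · exact (hV.total hz.2 hpV).resolve_right hpz
  exact .inl (hzp.trans hpx)

theorem IsMaxChain.mem_of_forall_le_or_le {α : Type*} [Preorder α] {U : Set α}
    (hU : IsMaxChain (· ≤ ·) U) {z : α} (hz : ∀ x, z ≤ x ∨ x ≤ z) : z ∈ U :=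
  (Flag.ofIsMaxChain U hU).mem_iff_forall_le_or_ge.2 fun x _ => hz x

theorem maxChain_inter_eq_narrows_general
    {M : Type*} [Lattice M] [Fintype M] [BoundedOrder M]
    (U V : Set M)
    (hU : IsMaxChain (· ≤ ·) U) (hV : IsMaxChain (· ≤ ·) V)
    (hJ : ∀ p : M, JoinIrred p → p ∈ U ∪ V) :
    U ∩ V = {z : M | ∀ x : M, z ≤ x ∨ x ≤ z} := by
  ext z
  exact ⟨le_or_le_of_mem_inter_of_joinIrred_subset hU.isChain hV.isChain hJ,
    fun hz => ⟨hU.mem_of_forall_le_or_le hz, hV.mem_of_forall_le_or_le hz⟩⟩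

/-- if `U` and `V` are maximal chains of a finite slim semimodular
lattice `M` containing all join-irreducible elements, then `U ∩ V` is exactly the
set of narrows of `M` (elements comparable with every element of `M`). -/
theorem maxChain_inter_eq_narrows
    {M : Type*} [Lattice M] [Fintype M] [BoundedOrder M]
    (hS : Slim M) (hM : Semimodular M) (U V : Set M)
    (hU : IsMaxChain (· ≤ ·) U) (hV : IsMaxChain (· ≤ ·) V)
    (hJ : ∀ p : M, JoinIrred p → p ∈ U ∪ V) :
    U ∩ V = {z : M | ∀ x : M, z ≤ x ∨ x ≤ z} :=
  maxChain_inter_eq_narrows_general U V hU hV hJ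
end
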